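/- arXiv:2104.14405 — 4 statements merged into one kernel-verified Lean document; each statement's English description precedes it below -/
import Mathlib

section
/- For complex q with |q| < 1 and complex z with |z| < 1, the Euler identity holds: ∑_{k=0}^∞ z^k / (q;q)_k = 1 / (z;q)_∞, where (z;q)_∞ = ∏_{k=0}^∞ (1 - z q^k). -/
open Finset

noncomputable def qPoch (q a : ℂ) (n : ℕ) : ℂ :=
  ∏ j ∈ Finset.range n, (1 - a * q ^ j)

noncomputable def qPochInf (q a : ℂ) : ℂ :=
  ∏' j : ℕ, (1 - a * q ^ j)

noncomputable def cauchyP (q x y : ℂ) (n : ℕ) : ℂ :=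
  ∏ j ∈ Finset.range n, (x - q ^ j * y)

noncomputable def qBinomR (q : ℂ) (α : ℝ) (k : ℕ) : ℂ :=
  qPoch q (q ^ (-α : ℂ)) k / qPoch q q k * (-1) ^ k *
    q ^ (((α * k - k * (k - 1) / 2 : ℝ)) : ℂ)

noncomputable def ciglerC (q : ℂ) (α : ℝ) (x y b : ℂ) (n : ℕ) : ℂ :=
  ∑ k ∈ Finset.range (n + 1),
    (-1) ^ k * q ^ (k.choose 2) * qBinomR q α k * b ^ k *
      (qPoch q q n / qPoch q q (n - k)) * cauchyP q x y (n - k)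

noncomputable def ciglerD (q : ℂ) (α : ℝ) (x y b : ℂ) (n : ℕ) : ℂ :=
  ∑ k ∈ Finset.range (n + 1),
    q ^ (k.choose 2) * qBinomR q α k * b ^ k *
      (qPoch q q n / qPoch q q (n - k)) *
      ((-1) ^ (n + k) * q ^ (-(n.choose 2 : ℤ)) * cauchyP q y x (n - k))

noncomputable def ascPhi (q α x : ℂ) (n : ℕ) : ℂ :=
  ∑ k ∈ Finset.range (n + 1),
    (qPoch q q n / (qPoch q q k * qPoch q q (n - k))) * qPoch q α k * x ^ k

noncomputable def ascPsi (q α x : ℂ) (n : ℕ) : ℂ :=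
  ∑ k ∈ Finset.range (n + 1),
    (qPoch q q n / (qPoch q q k * qPoch q q (n - k))) *
      q ^ ((k : ℤ) * ((k : ℤ) - (n : ℤ))) * qPoch q (α * q ^ (1 - (k : ℤ))) k * x ^ k

lemma qq_lower {q : ℂ} (hq : ‖q‖ < 1) : ∃ c > 0, ∀ k, c ≤ ‖qPoch q q k‖ := by
  set r := ‖q‖ with hr
  have hr0 : 0 ≤ r := norm_nonneg q
  have hrle : ∀ j : ℕ, r ^ (j + 1) ≤ r := by
    intro j
    have : r ^ (j+1) ≤ r ^ 1 := pow_le_pow_of_le_one hr0 hq.le (by omega)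
    simpa using this
  have hpow : ∀ j : ℕ, r ^ (j + 1) < 1 := fun j => lt_of_le_of_lt (hrle j) hq
  have hposf : ∀ j : ℕ, 0 < 1 - r ^ (j + 1) := fun j => by linarith [hpow j]
  have hsum : Summable (fun j : ℕ => - Real.log (1 - r ^ (j + 1))) := by
    refine Summable.of_nonneg_of_le ?_ ?_
      ((summable_geometric_of_lt_one hr0 hq).mul_left ((1 - r)⁻¹ * r))
    · intro j
      have : Real.log (1 - r ^ (j+1)) ≤ 0 :=
        Real.log_nonpos (by linarith [hposf j]) (by linarith [pow_nonneg hr0 (j+1)])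
      linarith
    · intro j
      have h1 : - Real.log (1 - r ^ (j+1)) = Real.log (1 - r ^ (j+1))⁻¹ := by
        rw [Real.log_inv]
      have h2 : Real.log (1 - r ^ (j+1))⁻¹ ≤ (1 - r ^ (j+1))⁻¹ - 1 :=
        Real.log_le_sub_one_of_pos (inv_pos.mpr (hposf j))
      have h3 : (1 - r ^ (j+1))⁻¹ - 1 = r ^ (j+1) * (1 - r ^ (j+1))⁻¹ := by
        have h := hposf j
        field_simp
        ring
      have h4 : r ^ (j+1) * (1 - r ^ (j+1))⁻¹ ≤ r ^ (j+1) * (1 - r)⁻¹ := by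
        apply mul_le_mul_of_nonneg_left ?_ (pow_nonneg hr0 _)
        apply inv_anti₀ (by linarith) (by linarith [hrle j])
      calc - Real.log (1 - r ^ (j+1)) ≤ r ^ (j+1) * (1 - r)⁻¹ := by
            rw [h1]; linarith
        _ = (1 - r)⁻¹ * r * r ^ j := by ring
  refine ⟨Real.exp (-∑' j, - Real.log (1 - r ^ (j + 1))), Real.exp_pos _, fun k => ?_⟩
  have hstep1 : Real.exp (-∑' j, - Real.log (1 - r ^ (j + 1)))
      ≤ ∏ j ∈ Finset.range k, (1 - r ^ (j + 1)) := by
    have hle : ∑ j ∈ Finset.range k, - Real.log (1 - r ^ (j + 1))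
        ≤ ∑' j, - Real.log (1 - r ^ (j + 1)) := by
      apply Summable.sum_le_tsum _ ?_ hsum
      intro j _
      have : Real.log (1 - r ^ (j+1)) ≤ 0 :=
        Real.log_nonpos (by linarith [hposf j]) (by linarith [pow_nonneg hr0 (j+1)])
      linarith
    calc Real.exp (-∑' j, - Real.log (1 - r ^ (j + 1)))
        ≤ Real.exp (∑ j ∈ Finset.range k, Real.log (1 - r ^ (j + 1))) := by
          apply Real.exp_le_exp.mpr
          have : ∑ j ∈ Finset.range k, Real.log (1 - r ^ (j + 1))
              = - ∑ j ∈ Finset.range k, - Real.log (1 - r ^ (j + 1)) := by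
            simp
          rw [this]
          linarith
      _ = ∏ j ∈ Finset.range k, (1 - r ^ (j + 1)) := by
          rw [Real.exp_sum]
          exact Finset.prod_congr rfl fun j _ => Real.exp_log (hposf j)
  have hstep2 : ∏ j ∈ Finset.range k, (1 - r ^ (j + 1)) ≤ ‖qPoch q q k‖ := by
    rw [qPoch, norm_prod]
    apply Finset.prod_le_prod
    · intro j _; linarith [hposf j]
    · intro j _
      have hnorm : ‖q * q ^ j‖ = r ^ (j + 1) := by
        rw [norm_mul, norm_pow, pow_succ]; ring
      calc 1 - r ^ (j+1) = 1 - ‖q * q ^ j‖ := by rw [hnorm]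
        _ ≤ ‖1 - q * q ^ j‖ := by
            have := norm_sub_norm_le (1 : ℂ) (q * q ^ j)
            simpa using this
  linarith

noncomputable def eulerS (q w : ℂ) : ℂ := ∑' k : ℕ, w ^ k / qPoch q q k

lemma eulerS_summable {q : ℂ} (hq : ‖q‖ < 1) {c : ℝ} (hc : 0 < c)
    (hcle : ∀ k, c ≤ ‖qPoch q q k‖) {w : ℂ} (hw : ‖w‖ < 1) :
    Summable (fun k : ℕ => w ^ k / qPoch q q k) := by
  apply Summable.of_norm
  refine Summable.of_nonneg_of_le (fun k => norm_nonneg _) (fun k => ?_)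
    ((summable_geometric_of_lt_one (norm_nonneg w) hw).mul_left c⁻¹)
  rw [norm_div, norm_pow]
  rw [div_le_iff₀ (lt_of_lt_of_le hc (hcle k))]
  calc ‖w‖ ^ k = c⁻¹ * ‖w‖ ^ k * c := by field_simp
    _ ≤ c⁻¹ * ‖w‖ ^ k * ‖qPoch q q k‖ := by
        apply mul_le_mul_of_nonneg_left (hcle k)
        positivity

lemma eulerS_eq {q : ℂ} (hq : ‖q‖ < 1) {c : ℝ} (hc : 0 < c)
    (hcle : ∀ k, c ≤ ‖qPoch q q k‖) {w : ℂ} (hw : ‖w‖ < 1) :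
    eulerS q w = 1 + ∑' k : ℕ, w ^ (k+1) / qPoch q q (k+1) := by
  rw [eulerS, Summable.tsum_eq_zero_add (eulerS_summable hq hc hcle hw)]
  simp [qPoch]

lemma eulerS_key {q : ℂ} (hq : ‖q‖ < 1) {c : ℝ} (hc : 0 < c)
    (hcle : ∀ k, c ≤ ‖qPoch q q k‖) {w : ℂ} (hw : ‖w‖ < 1) :
    (1 - w) * eulerS q w = eulerS q (q * w) := by
  have hPne : ∀ k, qPoch q q k ≠ 0 := by
    intro k h
    have := hcle k
    rw [h, norm_zero] at this
    linarith
  have hqw : ‖q * w‖ < 1 := by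
    rw [norm_mul]
    calc ‖q‖ * ‖w‖ ≤ 1 * ‖w‖ := by
          apply mul_le_mul_of_nonneg_right hq.le (norm_nonneg w)
      _ < 1 := by simpa using hw
  have ha := eulerS_summable hq hc hcle hw
  have ha' : Summable (fun k : ℕ => w ^ (k+1) / qPoch q q (k+1)) :=
    (summable_nat_add_iff (f := fun k : ℕ => w ^ k / qPoch q q k) 1).mpr ha
  have hterm : ∀ k : ℕ, (q*w) ^ (k+1) / qPoch q q (k+1)
      = w ^ (k+1) / qPoch q q (k+1) - w * (w ^ k / qPoch q q k) := by
    intro k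
    have hPs : qPoch q q (k+1) = qPoch q q k * (1 - q * q ^ k) := by
      rw [qPoch, qPoch, Finset.prod_range_succ]
    have h1 : qPoch q q k ≠ 0 := hPne k
    have h2 : (1 : ℂ) - q * q ^ k ≠ 0 := by
      intro h
      have := hPne (k+1)
      rw [hPs, h, mul_zero] at this
      exact this rfl
    rw [hPs]
    field_simp
    ring
  have e1 := eulerS_eq hq hc hcle hqw
  have e2 := eulerS_eq hq hc hcle hw
  have e3 : ∑' k : ℕ, (q*w) ^ (k+1) / qPoch q q (k+1)
      = (∑' k : ℕ, w ^ (k+1) / qPoch q q (k+1)) - w * eulerS q w := by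
    calc ∑' k : ℕ, (q*w) ^ (k+1) / qPoch q q (k+1)
        = ∑' k : ℕ, (w ^ (k+1) / qPoch q q (k+1) - w * (w ^ k / qPoch q q k)) :=
          tsum_congr hterm
      _ = (∑' k : ℕ, w ^ (k+1) / qPoch q q (k+1))
          - ∑' k : ℕ, w * (w ^ k / qPoch q q k) := Summable.tsum_sub ha' (ha.mul_left w)
      _ = (∑' k : ℕ, w ^ (k+1) / qPoch q q (k+1)) - w * eulerS q w := by
          rw [tsum_mul_left, eulerS]
  rw [e1, e3, e2]
  ring

lemma eulerS_iter (q z : ℂ) (hq : ‖q‖ < 1) (hz : ‖z‖ < 1) {c : ℝ} (hc : 0 < c)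
    (hcle : ∀ k, c ≤ ‖qPoch q q k‖) (n : ℕ) :
    eulerS q z * qPoch q z n = eulerS q (q ^ n * z) := by
  have hqn : ∀ m : ℕ, ‖q ^ m * z‖ < 1 := by
    intro m
    rw [norm_mul, norm_pow]
    calc ‖q‖ ^ m * ‖z‖ ≤ 1 * ‖z‖ := by
          apply mul_le_mul_of_nonneg_right (pow_le_one₀ (norm_nonneg q) hq.le) (norm_nonneg z)
      _ < 1 := by simpa using hz
  induction n with
  | zero => simp [qPoch]
  | succ n ih =>
    have hPs : qPoch q z (n+1) = qPoch q z n * (1 - z * q ^ n) := by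
      rw [qPoch, qPoch, Finset.prod_range_succ]
    have hk := eulerS_key hq hc hcle (hqn n)
    calc eulerS q z * qPoch q z (n+1) = (eulerS q z * qPoch q z n) * (1 - z * q ^ n) := by
          rw [hPs]; ring
      _ = eulerS q (q ^ n * z) * (1 - z * q ^ n) := by rw [ih]
      _ = (1 - q ^ n * z) * eulerS q (q ^ n * z) := by ring
      _ = eulerS q (q * (q ^ n * z)) := hk
      _ = eulerS q (q ^ (n+1) * z) := by ring_nf

lemma poch_multipliable (q z : ℂ) (hq : ‖q‖ < 1) (hz : ‖z‖ < 1) :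
    Multipliable (fun j : ℕ => 1 - z * q ^ j) := by
  have hlt : ∀ n : ℕ, ‖z * q ^ n‖ < 1 := by
    intro n
    rw [norm_mul, norm_pow]
    calc ‖z‖ * ‖q‖ ^ n ≤ ‖z‖ * 1 := by
          apply mul_le_mul_of_nonneg_left (pow_le_one₀ (norm_nonneg q) hq.le) (norm_nonneg z)
      _ < 1 := by simpa using hz
  have hne : ∀ (_ : Unit) (n : ℕ), (fun (n : ℕ) (_ : Unit) => 1 - z * q ^ n) n () ≠ 0 := by
    intro _ n h
    have h1 := hlt n
    have : z * q ^ n = 1 := by linear_combination -h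
    rw [this] at h1
    simp at h1
  have hlog : ∀ (_ : Unit), Summable (fun n : ℕ => Complex.log (1 - z * q ^ n)) := by
    intro _
    apply Summable.of_norm
    have hb : ∀ n : ℕ, ‖z * q ^ n‖ ≤ ‖z‖ * ‖q‖ ^ n := by
      intro n; rw [norm_mul, norm_pow]
    refine Summable.of_nonneg_of_le (fun n => norm_nonneg _) (fun n => ?_)
      (((summable_geometric_of_lt_one (norm_nonneg q) hq).mul_left
        (((1 - ‖z‖)⁻¹ / 2 + 1) * ‖z‖)))
    have heq : (1 : ℂ) - z * q ^ n = 1 + (-(z * q ^ n)) := by ring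
    rw [heq]
    have h1 := Complex.norm_log_one_add_le (z := -(z * q ^ n)) (by simpa using hlt n)
    rw [norm_neg] at h1
    set x := ‖z * q ^ n‖ with hx
    have hx0 : 0 ≤ x := norm_nonneg _
    have hx1 : x < 1 := hlt n
    have hxz : x ≤ ‖z‖ * ‖q‖ ^ n := hb n
    have hxz' : x ≤ ‖z‖ := by
      calc x ≤ ‖z‖ * ‖q‖ ^ n := hxz
        _ ≤ ‖z‖ * 1 := by
            apply mul_le_mul_of_nonneg_left (pow_le_one₀ (norm_nonneg q) hq.le) (norm_nonneg z)
        _ = ‖z‖ := by ring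
    have hinv : (1 - x)⁻¹ ≤ (1 - ‖z‖)⁻¹ := inv_anti₀ (by linarith) (by linarith)
    calc ‖Complex.log (1 + -(z * q ^ n))‖ ≤ x ^ 2 * (1 - x)⁻¹ / 2 + x := h1
      _ ≤ x * (1 - ‖z‖)⁻¹ / 2 + x := by
          have h3 : x ^ 2 * (1 - x)⁻¹ ≤ x * (1 - ‖z‖)⁻¹ := by
            have h2 : x ^ 2 ≤ x := by nlinarith
            exact mul_le_mul h2 hinv (inv_nonneg.mpr (by linarith)) hx0
          linarith
      _ = x * ((1 - ‖z‖)⁻¹ / 2 + 1) := by ring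
      _ ≤ (‖z‖ * ‖q‖ ^ n) * ((1 - ‖z‖)⁻¹ / 2 + 1) := by
          apply mul_le_mul_of_nonneg_right hxz
          have h4 : (0:ℝ) < 1 - ‖z‖ := by linarith
          positivity
      _ = ((1 - ‖z‖)⁻¹ / 2 + 1) * ‖z‖ * ‖q‖ ^ n := by ring
  exact Complex.multipliable_of_summable_log (hlog ())

lemma eulerS_tendsto_one (q z : ℂ) (hq : ‖q‖ < 1) (hz : ‖z‖ < 1) {c : ℝ} (hc : 0 < c)
    (hcle : ∀ k, c ≤ ‖qPoch q q k‖) :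
    Filter.Tendsto (fun n => eulerS q (q ^ n * z)) Filter.atTop (nhds 1) := by
  rw [tendsto_iff_norm_sub_tendsto_zero]
  have hqn : ∀ m : ℕ, ‖q ^ m * z‖ < 1 := by
    intro m
    rw [norm_mul, norm_pow]
    calc ‖q‖ ^ m * ‖z‖ ≤ 1 * ‖z‖ := by
          apply mul_le_mul_of_nonneg_right (pow_le_one₀ (norm_nonneg q) hq.le) (norm_nonneg z)
      _ < 1 := by simpa using hz
  have hbound : ∀ n : ℕ, ‖eulerS q (q ^ n * z) - 1‖ ≤ ‖q‖ ^ n * (‖z‖ * (c⁻¹ * (1 - ‖z‖)⁻¹)) := by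
    intro n
    set w := q ^ n * z with hw
    have hw1 : ‖w‖ < 1 := hqn n
    have hwz : ‖w‖ ≤ ‖q‖ ^ n * ‖z‖ := by rw [hw, norm_mul, norm_pow]
    have hwz' : ‖w‖ ≤ ‖z‖ := by
      calc ‖w‖ ≤ ‖q‖ ^ n * ‖z‖ := hwz
        _ ≤ 1 * ‖z‖ := by
            apply mul_le_mul_of_nonneg_right (pow_le_one₀ (norm_nonneg q) hq.le) (norm_nonneg z)
        _ = ‖z‖ := by ring
    have hsw := eulerS_summable hq hc hcle hw1
    have hsw' : Summable (fun k : ℕ => w ^ (k+1) / qPoch q q (k+1)) :=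
      (summable_nat_add_iff (f := fun k : ℕ => w ^ k / qPoch q q k) 1).mpr hsw
    have e2 : eulerS q w - 1 = ∑' k : ℕ, w ^ (k+1) / qPoch q q (k+1) := by
      rw [eulerS_eq hq hc hcle hw1]
      ring
    rw [e2]
    have hbk : ∀ k : ℕ, ‖w ^ (k+1) / qPoch q q (k+1)‖
        ≤ (‖q‖ ^ n * ‖z‖ * c⁻¹) * ‖z‖ ^ k := by
      intro k
      rw [norm_div, norm_pow]
      rw [div_le_iff₀ (lt_of_lt_of_le hc (hcle (k+1)))]
      have h1 : ‖w‖ ^ (k+1) ≤ (‖q‖ ^ n * ‖z‖) * ‖z‖ ^ k := by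
        calc ‖w‖ ^ (k+1) = ‖w‖ * ‖w‖ ^ k := by ring
          _ ≤ (‖q‖ ^ n * ‖z‖) * ‖z‖ ^ k :=
              mul_le_mul hwz (pow_le_pow_left₀ (norm_nonneg w) hwz' k)
                (by positivity) (by positivity)
      calc ‖w‖ ^ (k+1) ≤ (‖q‖ ^ n * ‖z‖) * ‖z‖ ^ k := h1
        _ = ((‖q‖ ^ n * ‖z‖ * c⁻¹) * ‖z‖ ^ k) * c := by field_simp
        _ ≤ ((‖q‖ ^ n * ‖z‖ * c⁻¹) * ‖z‖ ^ k) * ‖qPoch q q (k+1)‖ := by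
            apply mul_le_mul_of_nonneg_left (hcle (k+1))
            positivity
    calc ‖∑' k : ℕ, w ^ (k+1) / qPoch q q (k+1)‖
        ≤ ∑' k : ℕ, ‖w ^ (k+1) / qPoch q q (k+1)‖ := norm_tsum_le_tsum_norm hsw'.norm
      _ ≤ ∑' k : ℕ, (‖q‖ ^ n * ‖z‖ * c⁻¹) * ‖z‖ ^ k :=
          Summable.tsum_le_tsum hbk hsw'.norm
            ((summable_geometric_of_lt_one (norm_nonneg z) hz).mul_left _)
      _ = (‖q‖ ^ n * ‖z‖ * c⁻¹) * (1 - ‖z‖)⁻¹ := by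
          rw [tsum_mul_left, tsum_geometric_of_lt_one (norm_nonneg z) hz]
      _ = ‖q‖ ^ n * (‖z‖ * (c⁻¹ * (1 - ‖z‖)⁻¹)) := by ring
  apply squeeze_zero (fun n => norm_nonneg _) hbound
  have := (tendsto_pow_atTop_nhds_zero_of_lt_one (norm_nonneg q) hq).mul_const
    (‖z‖ * (c⁻¹ * (1 - ‖z‖)⁻¹))
  simpa using this

theorem stmt_1 (q z : ℂ) (hq : ‖q‖ < 1) (hz : ‖z‖ < 1) :
    ∑' k : ℕ, z ^ k / qPoch q q k = 1 / qPochInf q z := by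
  obtain ⟨c, hc, hcle⟩ := qq_lower hq
  have hT1 : Filter.Tendsto (fun n => eulerS q z * qPoch q z n) Filter.atTop
      (nhds (eulerS q z * qPochInf q z)) :=
    ((poch_multipliable q z hq hz).hasProd.tendsto_prod_nat).const_mul (eulerS q z)
  have hT4 : Filter.Tendsto (fun n => eulerS q z * qPoch q z n) Filter.atTop (nhds 1) :=
    (eulerS_tendsto_one q z hq hz hc hcle).congr
      (fun n => (eulerS_iter q z hq hz hc hcle n).symm)
  have heq1 : eulerS q z * qPochInf q z = 1 := tendsto_nhds_unique hT1 hT4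
  have hne0 : qPochInf q z ≠ 0 := by
    intro h
    rw [h, mul_zero] at heq1
    exact zero_ne_one heq1
  have hgoal : eulerS q z = 1 / qPochInf q z := by
    field_simp
    linear_combination heq1
  exact hgoal
end

section
/- For complex q with |q| < 1 and any complex z, the inverse Euler identity holds: ∑_{k=0}^∞ (-1)^k q^{k(k-1)/2} z^k / (q;q)_k = (z;q)_∞. -/
open Finset

open Filter Topology

noncomputable def eT (q z : ℂ) (k : ℕ) : ℂ :=
  (-1) ^ k * q ^ (k.choose 2) * z ^ k / qPoch q q k

lemma norm_q_pow_lt (q : ℂ) (hq : ‖q‖ < 1) (j : ℕ) : ‖q ^ (j + 1)‖ < 1 := by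
  rw [norm_pow]
  calc ‖q‖ ^ (j + 1) ≤ ‖q‖ ^ 1 :=
        pow_le_pow_of_le_one (norm_nonneg q) hq.le (by omega)
    _ < 1 := by simpa using hq

lemma one_sub_q_pow_ne (q : ℂ) (hq : ‖q‖ < 1) (j : ℕ) : (1 : ℂ) - q ^ (j + 1) ≠ 0 := by
  intro h
  have : q ^ (j + 1) = 1 := by linear_combination -h
  have h2 := norm_q_pow_lt q hq j
  rw [this] at h2
  simp at h2

lemma qPoch_q_ne_zero (q : ℂ) (hq : ‖q‖ < 1) (k : ℕ) : qPoch q q k ≠ 0 := by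
  rw [qPoch, Finset.prod_ne_zero_iff]
  intro j _
  have := one_sub_q_pow_ne q hq j
  rw [pow_succ'] at this
  exact this

lemma eT_zero (q z : ℂ) : eT q z 0 = 1 := by simp [eT, qPoch]

lemma eT_succ (q z : ℂ) (hq : ‖q‖ < 1) (k : ℕ) :
    eT q z (k + 1) = (-(q ^ k) * z / (1 - q ^ (k + 1))) * eT q z k := by
  have h1 : (k + 1).choose 2 = k.choose 2 + k := by
    rw [Nat.choose_succ_succ]
    simp [Nat.choose_one_right, Nat.add_comm]
  have h2 : qPoch q q (k + 1) = qPoch q q k * (1 - q ^ (k + 1)) := by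
    rw [qPoch, Finset.prod_range_succ, ← qPoch, pow_succ']
  have h3 := qPoch_q_ne_zero q hq k
  have h4 := one_sub_q_pow_ne q hq k
  rw [eT, eT, h1, h2]
  field_simp
  ring

lemma eT_mul_pow (q z w : ℂ) (k : ℕ) : eT q (w * z) k = w ^ k * eT q z k := by
  rw [eT, eT, mul_pow]
  ring

lemma eT_summable (q z : ℂ) (hq : ‖q‖ < 1) : Summable (eT q z) := by
  apply summable_of_ratio_norm_eventually_le (r := 1 / 2) (by norm_num)
  have h0 : Tendsto (fun k : ℕ => ‖q‖ ^ k * ‖z‖) atTop (𝓝 0) := by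
    simpa using (tendsto_pow_atTop_nhds_zero_of_lt_one (norm_nonneg q) hq).mul_const ‖z‖
  have hqpos : (0 : ℝ) < 1 - ‖q‖ := by linarith
  filter_upwards [h0.eventually_le_const (show (0:ℝ) < (1 - ‖q‖) / 2 by linarith)] with k hk
  rw [eT_succ q z hq, norm_mul]
  have hden : (1 : ℝ) - ‖q‖ ≤ ‖1 - q ^ (k + 1)‖ := by
    calc (1:ℝ) - ‖q‖ ≤ 1 - ‖q ^ (k+1)‖ := by
          have := norm_q_pow_lt q hq k
          have h' : ‖q ^ (k+1)‖ ≤ ‖q‖ := by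
            rw [norm_pow]
            calc ‖q‖ ^ (k+1) ≤ ‖q‖ ^ 1 := pow_le_pow_of_le_one (norm_nonneg q) hq.le (by omega)
              _ = ‖q‖ := pow_one _
          linarith
      _ ≤ ‖1 - q ^ (k+1)‖ := by
          have := norm_sub_norm_le (1 : ℂ) (q ^ (k+1))
          simpa using this
  have hnum : ‖-(q ^ k) * z‖ ≤ (1 - ‖q‖) / 2 := by
    rw [norm_mul, norm_neg, norm_pow]
    exact hk
  have : ‖-(q ^ k) * z / (1 - q ^ (k + 1))‖ ≤ 1 / 2 := by
    rw [norm_div]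
    calc ‖-(q ^ k) * z‖ / ‖1 - q ^ (k + 1)‖ ≤ ((1 - ‖q‖) / 2) / (1 - ‖q‖) := by
          apply div_le_div₀ (by linarith) hnum hqpos hden
      _ = 1 / 2 := by rw [div_right_comm, div_self (ne_of_gt hqpos)]
  have hnn : (0:ℝ) ≤ ‖eT q z k‖ := norm_nonneg _
  nlinarith [norm_nonneg (-(q ^ k) * z / (1 - q ^ (k + 1)))]

lemma eT_feq (q z : ℂ) (hq : ‖q‖ < 1) :
    (∑' k, eT q z k) = (1 - z) * ∑' k, eT q (q * z) k := by
  have hs := eT_summable q z hq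
  have hs' := eT_summable q (q * z) hq
  have key : ∀ k, eT q (q * z) (k + 1) - eT q z (k + 1) = z * eT q (q * z) k := by
    intro k
    have h4 := one_sub_q_pow_ne q hq k
    rw [eT_mul_pow, eT_mul_pow, eT_succ q z hq]
    field_simp
    ring
  have h2 : ∑' k, (eT q (q * z) k - eT q z k) = z * ∑' k, eT q (q * z) k := by
    rw [Summable.tsum_eq_zero_add (hs'.sub hs)]
    simp only [key, eT_zero, sub_self, zero_add]
    rw [tsum_mul_left]
  have h3 : ∑' k, (eT q (q * z) k - eT q z k)
      = (∑' k, eT q (q * z) k) - ∑' k, eT q z k := Summable.tsum_sub hs' hs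
  rw [h3] at h2
  linear_combination -h2


lemma eT_iter (q z : ℂ) (hq : ‖q‖ < 1) (n : ℕ) :
    (∑' k, eT q z k) = qPoch q z n * ∑' k, eT q (q ^ n * z) k := by
  induction n with
  | zero => simp [qPoch]
  | succ n ih =>
    rw [ih, eT_feq q (q ^ n * z) hq,
      show q * (q ^ n * z) = q ^ (n + 1) * z by ring,
      show qPoch q z (n + 1) = qPoch q z n * (1 - z * q ^ n) from Finset.prod_range_succ _ n]
    ring

lemma eT_tail_tendsto (q z : ℂ) (hq : ‖q‖ < 1) :
    Tendsto (fun n : ℕ => ∑' k, eT q (q ^ n * z) k) atTop (𝓝 1) := by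
  have hs := eT_summable q z hq
  have hsn : Summable (fun k => ‖eT q z (k + 1)‖) :=
    ((summable_nat_add_iff 1).2 hs).norm
  set M := ∑' k, ‖eT q z (k + 1)‖ with hM
  have hbound : ∀ n : ℕ, ‖(∑' k, eT q (q ^ n * z) k) - 1‖ ≤ ‖q‖ ^ n * M := by
    intro n
    have hsn' : Summable (fun k => eT q (q ^ n * z) (k + 1)) :=
      (summable_nat_add_iff 1).2 (eT_summable q (q ^ n * z) hq)
    rw [Summable.tsum_eq_zero_add (eT_summable q (q ^ n * z) hq), eT_zero, add_sub_cancel_left]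
    calc ‖∑' k, eT q (q ^ n * z) (k + 1)‖ ≤ ∑' k, ‖eT q (q ^ n * z) (k + 1)‖ :=
          norm_tsum_le_tsum_norm hsn'.norm
      _ ≤ ∑' k, ‖q‖ ^ n * ‖eT q z (k + 1)‖ := by
          apply Summable.tsum_le_tsum _ hsn'.norm (hsn.mul_left _)
          intro k
          rw [eT_mul_pow, norm_mul, norm_pow, norm_pow]
          gcongr
          exact pow_le_of_le_one (by positivity) (pow_le_one₀ (norm_nonneg q) hq.le)
            (by omega)
      _ = ‖q‖ ^ n * M := tsum_mul_left
  have h0 : Tendsto (fun n : ℕ => (∑' k, eT q (q ^ n * z) k) - 1) atTop (𝓝 0) := by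
    apply squeeze_zero_norm hbound
    simpa using (tendsto_pow_atTop_nhds_zero_of_lt_one (norm_nonneg q) hq).mul_const M
  have := h0.add_const 1
  simpa using this

lemma hasProd_qPochInf (q z : ℂ) (hq : ‖q‖ < 1) :
    HasProd (fun j : ℕ => 1 - z * q ^ j) (qPochInf q z) := by
  by_cases hz : ∀ j : ℕ, (1 : ℂ) - z * q ^ j ≠ 0
  · have hlog : Summable (fun n : ℕ => Complex.log (1 - z * q ^ n)) := by
      apply Summable.of_norm_bounded_eventually_nat (g := fun n => 3 / 2 * (‖z‖ * ‖q‖ ^ n))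
      · exact ((summable_geometric_of_lt_one (norm_nonneg q) hq).mul_left ‖z‖).mul_left _
      · have h0 : Tendsto (fun n : ℕ => ‖z‖ * ‖q‖ ^ n) atTop (𝓝 0) := by
          simpa using (tendsto_pow_atTop_nhds_zero_of_lt_one (norm_nonneg q) hq).const_mul ‖z‖
        filter_upwards [h0.eventually_le_const (show (0:ℝ) < 1/2 by norm_num)] with n hn
        have hle : ‖-(z * q ^ n)‖ ≤ 1 / 2 := by
          rw [norm_neg, norm_mul, norm_pow]; exact hn
        calc ‖Complex.log (1 - z * q ^ n)‖
            = ‖Complex.log (1 + -(z * q ^ n))‖ := by rw [sub_eq_add_neg]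
          _ ≤ 3 / 2 * ‖-(z * q ^ n)‖ := Complex.norm_log_one_add_half_le_self hle
          _ = 3 / 2 * (‖z‖ * ‖q‖ ^ n) := by rw [norm_neg, norm_mul, norm_pow]
    exact (Complex.hasProd_of_hasSum_log (f := fun j : ℕ => 1 - z * q ^ j)
      hz hlog.hasSum).multipliable.hasProd
  · push_neg at hz
    obtain ⟨j0, hj0⟩ := hz
    have h0 : HasProd (fun j : ℕ => 1 - z * q ^ j) 0 := by
      rw [HasProd]
      apply Tendsto.congr' _ (tendsto_const_nhds (x := (0 : ℂ)))
      filter_upwards [eventually_ge_atTop ({j0} : Finset ℕ)] with s hs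
      exact (Finset.prod_eq_zero (hs (Finset.mem_singleton_self j0)) hj0).symm
    have : qPochInf q z = 0 := h0.tprod_eq
    rw [this]
    exact h0

theorem stmt_2 (q z : ℂ) (hq : ‖q‖ < 1) :
    ∑' k : ℕ, (-1) ^ k * q ^ (k.choose 2) * z ^ k / qPoch q q k = qPochInf q z := by
  have hprod : Tendsto (fun n : ℕ => qPoch q z n) atTop (𝓝 (qPochInf q z)) :=
    (hasProd_qPochInf q z hq).tendsto_prod_nat
  have hmul := hprod.mul (eT_tail_tendsto q z hq)
  have hconst : (fun n : ℕ => qPoch q z n * ∑' k, eT q (q ^ n * z) k)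
      = fun _ : ℕ => ∑' k, eT q z k := funext fun n => (eT_iter q z hq n).symm
  rw [hconst] at hmul
  have := tendsto_nhds_unique hmul tendsto_const_nhds
  rw [mul_one] at this
  exact this.symm
end

section
/- For complex q with |q| < 1, complex a, and |z| < 1, the q-binomial theorem holds: ∑_{k=0}^∞ (a;q)_k z^k / (q;q)_k = (az;q)_∞ / (z;q)_∞. -/
open Finset

lemma one_sub_ne_zero_of_norm_lt {u : ℂ} (h : ‖u‖ < 1) : 1 - u ≠ 0 := by
  intro h0
  rw [sub_eq_zero] at h0
  rw [← h0] at h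
  simp at h

lemma norm_qPoch_le (q w : ℂ) (hq : ‖q‖ < 1) (k : ℕ) :
    ‖qPoch q w k‖ ≤ Real.exp (‖w‖ / (1 - ‖q‖)) := by
  have hq0 : (0:ℝ) < 1 - ‖q‖ := by linarith
  calc ‖qPoch q w k‖ = ∏ j ∈ range k, ‖1 - w * q ^ j‖ := by
        rw [qPoch, norm_prod]
    _ ≤ ∏ j ∈ range k, Real.exp (‖w‖ * ‖q‖ ^ j) := by
        refine Finset.prod_le_prod (fun j _ => norm_nonneg _) (fun j _ => ?_)
        calc ‖1 - w * q ^ j‖ ≤ ‖(1:ℂ)‖ + ‖w * q ^ j‖ := norm_sub_le _ _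
          _ = 1 + ‖w‖ * ‖q‖ ^ j := by simp
          _ ≤ Real.exp (‖w‖ * ‖q‖ ^ j) := by
              have := Real.add_one_le_exp (‖w‖ * ‖q‖ ^ j); linarith
    _ = Real.exp (∑ j ∈ range k, ‖w‖ * ‖q‖ ^ j) := (Real.exp_sum _ _).symm
    _ ≤ Real.exp (‖w‖ / (1 - ‖q‖)) := by
        apply Real.exp_le_exp.2
        rw [← Finset.mul_sum]
        have h1 : ∑ j ∈ range k, ‖q‖ ^ j ≤ 1/(1-‖q‖) := by
          rcases eq_or_ne ‖q‖ 1 with h | h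
          · simp [h] at hq
          · rw [geom_sum_eq h]
            have hxk : ‖q‖ ^ k ≤ 1 := pow_le_one₀ (norm_nonneg q) hq.le
            have heq : (‖q‖ ^ k - 1) / (‖q‖ - 1) = (1 - ‖q‖ ^ k)/(1 - ‖q‖) := by
              rw [div_eq_div_iff (by linarith) (by linarith)]; ring
            rw [heq]
            gcongr
            nlinarith [pow_nonneg (norm_nonneg q) k]
        calc ‖w‖ * ∑ j ∈ range k, ‖q‖ ^ j ≤ ‖w‖ * (1/(1-‖q‖)) :=
              mul_le_mul_of_nonneg_left h1 (norm_nonneg w)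
          _ = ‖w‖ / (1 - ‖q‖) := by ring

-- key pointwise bound: for 0 ≤ x ≤ c < 1, exp (-(x/(1-c))) ≤ 1 - x
lemma exp_neg_le_one_sub {x c : ℝ} (hx : 0 ≤ x) (hxc : x ≤ c) (hc : c < 1) :
    Real.exp (-(x / (1 - c))) ≤ 1 - x := by
  have hc0 : (0:ℝ) < 1 - c := by linarith
  have hx1 : x < 1 := lt_of_le_of_lt hxc hc
  have h1 : 1 + x / (1 - c) ≤ Real.exp (x / (1 - c)) := by
    have := Real.add_one_le_exp (x / (1 - c)); linarith
  have h2 : (1 - x)⁻¹ ≤ 1 + x / (1 - c) := by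
    rw [inv_le_iff_one_le_mul₀ (by linarith)]
    have : 0 ≤ x * (x / (1-c)) := by positivity
    have h3 : x / (1-x) ≤ x / (1-c) := by
      apply div_le_div_of_nonneg_left hx (by linarith) (by linarith)
    have hne : (1:ℝ) - x ≠ 0 := by linarith
    have h4 : (1 + x/(1-x)) * (1-x) = 1 := by field_simp; ring
    nlinarith [div_nonneg hx hc0.le]
  have h5 : (1 - x)⁻¹ ≤ Real.exp (x / (1 - c)) := le_trans h2 h1
  rw [Real.exp_neg, inv_le_comm₀ (Real.exp_pos _) (by linarith)]
  exact h5

lemma le_norm_qPoch (q w : ℂ) (hq : ‖q‖ < 1) (hw : ‖w‖ < 1) (k : ℕ) :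
    Real.exp (-(‖w‖ / ((1 - ‖w‖) * (1 - ‖q‖)))) ≤ ‖qPoch q w k‖ := by
  have hq0 : (0:ℝ) < 1 - ‖q‖ := by linarith
  have hw0 : (0:ℝ) < 1 - ‖w‖ := by linarith
  have key : ∀ j : ℕ, Real.exp (-(‖w‖ * ‖q‖ ^ j / (1 - ‖w‖))) ≤ ‖1 - w * q ^ j‖ := by
    intro j
    have hx : (0:ℝ) ≤ ‖w‖ * ‖q‖ ^ j := by positivity
    have hxc : ‖w‖ * ‖q‖ ^ j ≤ ‖w‖ := by
      nlinarith [pow_le_one₀ (norm_nonneg q) hq.le (n := j), norm_nonneg w]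
    calc Real.exp (-(‖w‖ * ‖q‖ ^ j / (1 - ‖w‖))) ≤ 1 - ‖w‖ * ‖q‖ ^ j :=
          exp_neg_le_one_sub hx hxc hw
      _ = 1 - ‖w * q ^ j‖ := by rw [norm_mul, norm_pow]
      _ ≤ ‖1 - w * q ^ j‖ := by
          have := norm_sub_norm_le (1 : ℂ) (w * q ^ j)
          simpa using this
  calc Real.exp (-(‖w‖ / ((1 - ‖w‖) * (1 - ‖q‖))))
      ≤ Real.exp (-(∑ j ∈ range k, ‖w‖ * ‖q‖ ^ j / (1 - ‖w‖))) := by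
        apply Real.exp_le_exp.2
        rw [neg_le_neg_iff]
        have h1 : ∑ j ∈ range k, ‖w‖ * ‖q‖ ^ j / (1 - ‖w‖)
            = (‖w‖ / (1 - ‖w‖)) * ∑ j ∈ range k, ‖q‖ ^ j := by
          rw [Finset.mul_sum]; apply Finset.sum_congr rfl; intro j _; ring
        rw [h1]
        have h2 : ∑ j ∈ range k, ‖q‖ ^ j ≤ 1/(1-‖q‖) := by
          rcases eq_or_ne ‖q‖ 1 with h | h
          · simp [h] at hq
          · rw [geom_sum_eq h]
            have hxk : ‖q‖ ^ k ≤ 1 := pow_le_one₀ (norm_nonneg q) hq.le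
            have heq : (‖q‖ ^ k - 1) / (‖q‖ - 1) = (1 - ‖q‖ ^ k)/(1 - ‖q‖) := by
              rw [div_eq_div_iff (by linarith) (by linarith)]; ring
            rw [heq]
            gcongr
            nlinarith [pow_nonneg (norm_nonneg q) k]
        calc (‖w‖ / (1 - ‖w‖)) * ∑ j ∈ range k, ‖q‖ ^ j
            ≤ (‖w‖ / (1 - ‖w‖)) * (1/(1-‖q‖)) := by
              apply mul_le_mul_of_nonneg_left h2 (by positivity)
          _ = ‖w‖ / ((1 - ‖w‖) * (1 - ‖q‖)) := by field_simp
    _ = ∏ j ∈ range k, Real.exp (-(‖w‖ * ‖q‖ ^ j / (1 - ‖w‖))) := by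
        rw [← Real.exp_sum, ← Finset.sum_neg_distrib]
    _ ≤ ∏ j ∈ range k, ‖1 - w * q ^ j‖ := by
        apply Finset.prod_le_prod (fun j _ => (Real.exp_pos _).le) (fun j _ => key j)
    _ = ‖qPoch q w k‖ := by rw [qPoch, norm_prod]

lemma multipliable_qPoch (q w : ℂ) (hq : ‖q‖ < 1) :
    Multipliable (fun j : ℕ => 1 - w * q ^ j) := by
  obtain ⟨N, hN⟩ : ∃ N, ∀ j ≥ N, ‖w‖ * ‖q‖ ^ j ≤ 1/2 := by
    have h := (tendsto_pow_atTop_nhds_zero_of_lt_one (norm_nonneg q) hq).const_mul ‖w‖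
    rw [mul_zero] at h
    have := h.eventually (eventually_le_nhds (by norm_num : (0:ℝ) < 1/2))
    exact this.exists_forall_of_atTop
  have hne : ∀ n : ℕ, (1 : ℂ) - w * q ^ (n + N) ≠ 0 := by
    intro n
    apply one_sub_ne_zero_of_norm_lt
    have := hN (n + N) (Nat.le_add_left N n)
    rw [norm_mul, norm_pow]
    linarith
  have htail : Multipliable (fun n : ℕ => 1 - w * q ^ (n + N)) := by
    apply Complex.multipliable_of_summable_log
    apply Summable.of_norm_bounded (g := fun n => 3/2 * (‖w‖ * ‖q‖ ^ N * ‖q‖ ^ n))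
    · apply Summable.mul_left
      apply Summable.mul_left
      exact summable_geometric_of_lt_one (norm_nonneg q) hq
    · intro n
      have hb : ‖-(w * q ^ (n + N))‖ ≤ 1/2 := by
        rw [norm_neg, norm_mul, norm_pow]
        exact hN (n + N) (Nat.le_add_left N n)
      have := Complex.norm_log_one_add_half_le_self hb
      show ‖Complex.log (1 - w * q ^ (n + N))‖ ≤ 3/2 * (‖w‖ * ‖q‖ ^ N * ‖q‖ ^ n)
      rw [show (1 : ℂ) - w * q ^ (n + N) = 1 + -(w * q ^ (n + N)) by ring] 
      apply le_trans this
      rw [norm_neg, norm_mul, norm_pow, pow_add]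
      ring_nf
      nlinarith [norm_nonneg w, pow_nonneg (norm_nonneg q) n, pow_nonneg (norm_nonneg q) N]
  exact (HasProd.prod_range_mul (f := fun j : ℕ => 1 - w * q ^ j) (k := N) htail.hasProd).multipliable

lemma tendsto_qPoch (q w : ℂ) (hq : ‖q‖ < 1) :
    Filter.Tendsto (fun n => qPoch q w n) Filter.atTop (nhds (qPochInf q w)) :=
  (multipliable_qPoch q w hq).hasProd.tendsto_prod_nat

open Filter

theorem stmt_3 (q a z : ℂ) (hq : ‖q‖ < 1) (hz : ‖z‖ < 1) :
    ∑' k : ℕ, qPoch q a k * z ^ k / qPoch q q k = qPochInf q (a * z) / qPochInf q z := by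
  have hq1 : (0:ℝ) < 1 - ‖q‖ := by linarith
  have hz1 : (0:ℝ) < 1 - ‖z‖ := by linarith
  have hqq : ∀ j : ℕ, (1:ℂ) - q * q ^ j ≠ 0 := by
    intro j
    apply one_sub_ne_zero_of_norm_lt
    rw [norm_mul, norm_pow]
    nlinarith [pow_le_one₀ (norm_nonneg q) hq.le (n := j), norm_nonneg q,
      pow_nonneg (norm_nonneg q) j]
  have hPq : ∀ k, qPoch q q k ≠ 0 := by
    intro k
    rw [qPoch]
    exact Finset.prod_ne_zero_iff.2 (fun j _ => hqq j)
  set c : ℕ → ℂ := fun k => qPoch q a k / qPoch q q k with hc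
  set C : ℝ := Real.exp (‖a‖ / (1 - ‖q‖)) * Real.exp (‖q‖ / ((1 - ‖q‖) * (1 - ‖q‖))) with hCdef
  have hC0 : 0 < C := by positivity
  have hC : ∀ k, ‖c k‖ ≤ C := by
    intro k
    rw [hc]
    simp only [norm_div]
    have h1 := norm_qPoch_le q a hq k
    have h2 := le_norm_qPoch q q hq hq k
    calc ‖qPoch q a k‖ / ‖qPoch q q k‖
        ≤ Real.exp (‖a‖ / (1 - ‖q‖)) / Real.exp (-(‖q‖ / ((1 - ‖q‖) * (1 - ‖q‖)))) := by
          apply div_le_div₀ (Real.exp_pos _).le h1 (Real.exp_pos _) h2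
      _ = C := by
          rw [← Real.exp_sub, sub_neg_eq_add, hCdef, ← Real.exp_add]
  have hsum : ∀ w : ℂ, ‖w‖ < 1 → Summable (fun k => c k * w ^ k) := by
    intro w hw
    apply Summable.of_norm_bounded (g := fun k => C * ‖w‖ ^ k)
      ((summable_geometric_of_lt_one (norm_nonneg w) hw).mul_left C)
    intro k
    rw [norm_mul, norm_pow]
    exact mul_le_mul_of_nonneg_right (hC k) (by positivity)
  set F : ℂ → ℂ := fun w => ∑' k, c k * w ^ k with hF
  have hrec : ∀ k, c (k + 1) * (1 - q ^ (k + 1)) = c k * (1 - a * q ^ k) := by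
    intro k
    have h3 : (1:ℂ) - q ^ (k+1) ≠ 0 := by rw [pow_succ']; exact hqq k
    have e1 : qPoch q a (k+1) = qPoch q a k * (1 - a * q ^ k) := Finset.prod_range_succ _ k
    have e2 : qPoch q q (k+1) = qPoch q q k * (1 - q ^ (k+1)) := by
      rw [pow_succ']; exact Finset.prod_range_succ _ k
    rw [hc]
    simp only
    rw [e1, e2]
    field_simp [hPq k, h3]
  have hfun : ∀ w : ℂ, ‖w‖ < 1 → (1 - w) * F w = (1 - a * w) * F (q * w) := by
    intro w hw
    have hqw : ‖q * w‖ < 1 := by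
      rw [norm_mul]
      nlinarith [norm_nonneg q, norm_nonneg w]
    have S1 := hsum w hw
    have S2 := hsum (q * w) hqw
    have hg : ∀ k, c k * (1 - q ^ k) * w ^ k = c k * w ^ k - c k * (q * w) ^ k := by
      intro k; rw [mul_pow]; ring
    have hh : ∀ k, c k * (1 - a * q ^ k) * w ^ (k+1)
        = w * (c k * w ^ k) - (a * w) * (c k * (q * w) ^ k) := by
      intro k; rw [mul_pow]; ring
    have Sg : Summable (fun k => c k * (1 - q ^ k) * w ^ k) :=
      (S1.sub S2).congr (fun k => (hg k).symm)
    have key : ∑' k, c k * (1 - q ^ k) * w ^ k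
        = ∑' k, c k * (1 - a * q ^ k) * w ^ (k + 1) := by
      rw [Summable.tsum_eq_zero_add Sg]
      have h0 : c 0 * (1 - q ^ 0) * w ^ 0 = 0 := by simp
      rw [h0, zero_add]
      exact tsum_congr (fun k => by rw [← hrec k])
    have e1 : ∑' k, c k * (1 - q ^ k) * w ^ k = F w - F (q * w) := by
      rw [show (fun k => c k * (1 - q ^ k) * w ^ k)
          = fun k => c k * w ^ k - c k * (q * w) ^ k from funext hg]
      exact Summable.tsum_sub S1 S2
    have e2 : ∑' k, c k * (1 - a * q ^ k) * w ^ (k + 1)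
        = w * F w - (a * w) * F (q * w) := by
      rw [show (fun k => c k * (1 - a * q ^ k) * w ^ (k + 1))
          = fun k => w * (c k * w ^ k) - (a * w) * (c k * (q * w) ^ k) from funext hh]
      rw [Summable.tsum_sub (S1.mul_left w) (S2.mul_left (a * w)), tsum_mul_left, tsum_mul_left]
    have main : F w - F (q * w) = w * F w - (a * w) * F (q * w) := by
      rw [← e1, ← e2, key]
    linear_combination main
  have hiter : ∀ n : ℕ, qPoch q z n * F z = qPoch q (a * z) n * F (q ^ n * z) := by
    intro n
    induction n with
    | zero => simp [qPoch]
    | succ n ih =>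
      have hw : ‖q ^ n * z‖ < 1 := by
        rw [norm_mul, norm_pow]
        nlinarith [pow_le_one₀ (norm_nonneg q) hq.le (n := n), norm_nonneg z,
          pow_nonneg (norm_nonneg q) n]
      have hf := hfun (q ^ n * z) hw
      have e1 : qPoch q z (n+1) = qPoch q z n * (1 - z * q ^ n) := Finset.prod_range_succ _ n
      have e2 : qPoch q (a*z) (n+1) = qPoch q (a*z) n * (1 - a * z * q ^ n) :=
        Finset.prod_range_succ _ n
      have e3 : q * (q ^ n * z) = q ^ (n+1) * z := by ring
      rw [e1, e2, ← e3]
      have step : qPoch q z n * (1 - z * q ^ n) * F z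
          = qPoch q (a*z) n * ((1 - q ^ n * z) * F (q ^ n * z)) := by
        linear_combination (1 - z * q ^ n) * ih
      rw [step, hf]
      ring
  have hFsub : ∀ w : ℂ, ‖w‖ < 1 → ‖F w - 1‖ ≤ C * ‖w‖ * (1 - ‖w‖)⁻¹ := by
    intro w hw
    have S1 := hsum w hw
    have hF1 : F w - 1 = ∑' k, c (k+1) * w ^ (k+1) := by
      rw [hF]
      simp only
      rw [Summable.tsum_eq_zero_add S1]
      have h0 : c 0 * w ^ 0 = 1 := by simp [hc, qPoch]
      rw [h0]
      ring
    rw [hF1]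
    have hgeo : HasSum (fun k : ℕ => (C * ‖w‖) * ‖w‖ ^ k) ((C * ‖w‖) * (1 - ‖w‖)⁻¹) :=
      (hasSum_geometric_of_lt_one (norm_nonneg w) hw).mul_left _
    have hb : ∀ k : ℕ, ‖c (k+1) * w ^ (k+1)‖ ≤ (C * ‖w‖) * ‖w‖ ^ k := by
      intro k
      rw [norm_mul, norm_pow, pow_succ']
      calc ‖c (k+1)‖ * (‖w‖ * ‖w‖ ^ k) ≤ C * (‖w‖ * ‖w‖ ^ k) :=
            mul_le_mul_of_nonneg_right (hC _) (by positivity)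
        _ = C * ‖w‖ * ‖w‖ ^ k := by ring
    calc ‖∑' k, c (k+1) * w ^ (k+1)‖ ≤ (C * ‖w‖) * (1 - ‖w‖)⁻¹ :=
          tsum_of_norm_bounded hgeo hb
      _ = C * ‖w‖ * (1 - ‖w‖)⁻¹ := by ring
  have h3 : Tendsto (fun n : ℕ => F (q ^ n * z)) atTop (nhds 1) := by
    have hzero : Tendsto (fun n : ℕ => F (q ^ n * z) - 1) atTop (nhds 0) := by
      have hgt : Tendsto (fun n : ℕ => (C * ‖z‖ * (1 - ‖z‖)⁻¹) * ‖q‖ ^ n) atTop (nhds 0) := by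
        have := (tendsto_pow_atTop_nhds_zero_of_lt_one (norm_nonneg q) hq).const_mul
          (C * ‖z‖ * (1 - ‖z‖)⁻¹)
        rwa [mul_zero] at this
      apply squeeze_zero_norm _ hgt
      · intro n
        have hwn : ‖q ^ n * z‖ ≤ ‖z‖ * ‖q‖ ^ n := by
          rw [norm_mul, norm_pow]; ring_nf; exact le_refl _
        have hwn1 : ‖q ^ n * z‖ < 1 := by
          have h1 : ‖z‖ * ‖q‖ ^ n ≤ ‖z‖ := by
            nlinarith [pow_le_one₀ (norm_nonneg q) hq.le (n := n), norm_nonneg z,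
              pow_nonneg (norm_nonneg q) n]
          linarith [hwn.trans h1]
        calc ‖F (q ^ n * z) - 1‖ ≤ C * ‖q ^ n * z‖ * (1 - ‖q ^ n * z‖)⁻¹ :=
              hFsub _ hwn1
          _ ≤ (C * ‖z‖ * (1 - ‖z‖)⁻¹) * ‖q‖ ^ n := by
              have h1 : ‖z‖ * ‖q‖ ^ n ≤ ‖z‖ := by
                nlinarith [pow_le_one₀ (norm_nonneg q) hq.le (n := n), norm_nonneg z,
                  pow_nonneg (norm_nonneg q) n]
              have h2 : (1 - ‖q ^ n * z‖)⁻¹ ≤ (1 - ‖z‖)⁻¹ := by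
                apply inv_anti₀ (by linarith) (by linarith [hwn.trans h1])
              calc C * ‖q ^ n * z‖ * (1 - ‖q ^ n * z‖)⁻¹
                  ≤ C * (‖z‖ * ‖q‖ ^ n) * (1 - ‖z‖)⁻¹ := by
                    apply mul_le_mul (mul_le_mul_of_nonneg_left hwn hC0.le) h2
                      (inv_nonneg.2 (by linarith [hwn.trans h1])) (by positivity)
                _ = (C * ‖z‖ * (1 - ‖z‖)⁻¹) * ‖q‖ ^ n := by ring
    have := hzero.add_const 1
    simpa using this
  have h1 : Tendsto (fun n => qPoch q z n * F z) atTop (nhds (qPochInf q z * F z)) :=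
    (tendsto_qPoch q z hq).mul_const _
  have h4 : Tendsto (fun n => qPoch q (a*z) n * F (q ^ n * z)) atTop
      (nhds (qPochInf q (a*z) * 1)) :=
    (tendsto_qPoch q (a*z) hq).mul h3
  have heq : qPochInf q z * F z = qPochInf q (a*z) * 1 :=
    tendsto_nhds_unique (h1.congr hiter) h4
  have hne : qPochInf q z ≠ 0 := by
    have hlb := le_norm_qPoch q z hq hz
    have hle : Real.exp (-(‖z‖ / ((1 - ‖z‖) * (1 - ‖q‖)))) ≤ ‖qPochInf q z‖ :=
      ge_of_tendsto' (tendsto_qPoch q z hq).norm hlb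
    intro h0
    rw [h0, norm_zero] at hle
    exact absurd hle (not_le.2 (Real.exp_pos _))
  have hLHS : ∑' k : ℕ, qPoch q a k * z ^ k / qPoch q q k = F z :=
    tsum_congr (fun k => mul_div_right_comm _ _ _)
  rw [hLHS, eq_div_iff hne]
  linear_combination heq
end

section
/- For complex q with |q| < 1, complex x, y, and t with |xt| < 1, the Cauchy polynomials p_n(x,y) = (x - y)(x - qy)···(x - q^{n-1}y) = (y/x;q)_n x^n satisfy the generating function ∑_{n=0}^∞ p_n(x,y) t^n / (q;q)_n = (yt;q)_∞ / (xt;q)_∞. -/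
open Finset

section Aux

open Filter Complex

/-- summability of logs of the factors -/
lemma aux_log_summable (w q : ℂ) (hq : ‖q‖ < 1) :
    Summable (fun j : ℕ => Complex.log (1 - w * q ^ j)) := by
  have hq0 : (0:ℝ) ≤ ‖q‖ := norm_nonneg q
  have htend : Tendsto (fun j : ℕ => ‖w‖ * ‖q‖ ^ j) atTop (nhds 0) := by
    simpa using (tendsto_pow_atTop_nhds_zero_of_lt_one hq0 hq).const_mul ‖w‖
  have hev : ∀ᶠ j : ℕ in atTop, ‖Complex.log (1 - w * q ^ j)‖ ≤ 3/2 * (‖w‖ * ‖q‖ ^ j) := by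
    filter_upwards [htend.eventually_le_const (by norm_num : (0:ℝ) < 1/2)] with j hj
    have hn : ‖-(w * q ^ j)‖ ≤ 1/2 := by
      simpa [norm_mul, norm_pow] using hj
    have := Complex.norm_log_one_add_half_le_self hn
    simpa [sub_eq_add_neg, norm_mul, norm_pow] using this
  exact Summable.of_norm_bounded_eventually_nat
    (by simpa [mul_assoc] using ((summable_geometric_of_lt_one hq0 hq).mul_left (3/2 * ‖w‖))) hev

lemma aux_multipliable (w q : ℂ) (hq : ‖q‖ < 1) :
    Multipliable (fun j : ℕ => 1 - w * q ^ j) := by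
  by_cases h : ∀ j : ℕ, 1 - w * q ^ j ≠ 0
  · exact Complex.multipliable_of_summable_log (aux_log_summable w q hq)
  · push_neg at h
    obtain ⟨j0, hj0⟩ := h
    refine ⟨0, ?_⟩
    rw [HasProd]
    have : ∀ᶠ s : Finset ℕ in atTop, (∏ i ∈ s, (1 - w * q ^ i)) = 0 := by
      filter_upwards [eventually_ge_atTop ({j0} : Finset ℕ)] with s hs
      exact Finset.prod_eq_zero (hs (Finset.mem_singleton_self j0)) hj0
    exact Tendsto.congr' (this.mono fun s hs => hs.symm) tendsto_const_nhds

lemma aux_tprod_ne_zero (w q : ℂ) (hq : ‖q‖ < 1) (h : ∀ j : ℕ, 1 - w * q ^ j ≠ 0) :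
    (∏' j : ℕ, (1 - w * q ^ j)) ≠ 0 := by
  have := Complex.cexp_tsum_eq_tprod (f := fun j : ℕ => 1 - w * q ^ j)
    h (aux_log_summable w q hq)
  rw [← this]
  exact Complex.exp_ne_zero _

/-- factors with small parameter are nonzero -/
lemma aux_fac_ne (w q : ℂ) (hw : ‖w‖ < 1) (hq : ‖q‖ < 1) (j : ℕ) : 1 - w * q ^ j ≠ 0 := by
  intro h
  have h1 : (1:ℂ) = w * q ^ j := by linear_combination h
  have : ‖w * q ^ j‖ < 1 := by
    calc ‖w * q ^ j‖ = ‖w‖ * ‖q‖ ^ j := by simp [norm_mul, norm_pow]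
    _ ≤ ‖w‖ * 1 := mul_le_mul_of_nonneg_left (pow_le_one₀ (norm_nonneg q) hq.le) (norm_nonneg w)
    _ < 1 := by simpa using hw
  rw [← h1] at this; simp at this

lemma aux_qPoch_ne (q : ℂ) (hq : ‖q‖ < 1) (n : ℕ) : qPoch q q n ≠ 0 :=
  Finset.prod_ne_zero_iff.2 fun j _ => aux_fac_ne q q hq hq j

lemma aux_norm_lb (a : ℕ → ℂ) (ha : ∀ n, a n ≠ 0) (L : ℂ) (hL : L ≠ 0)
    (h : Tendsto a atTop (nhds L)) : ∃ C > 0, ∀ n : ℕ, C ≤ ‖a n‖ := by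
  have hnorm : Tendsto (fun n => ‖a n‖) atTop (nhds ‖L‖) := h.norm
  have hL2 : 0 < ‖L‖ / 2 := half_pos (norm_pos_iff.2 hL)
  obtain ⟨N, hN⟩ :=
    (hnorm.eventually_const_le (half_lt_self (norm_pos_iff.2 hL))).exists_forall_of_atTop
  set m := (Finset.range (N + 1)).inf' (by simp) (fun n => ‖a n‖) with hm
  have hmpos : 0 < m := by
    rw [hm]
    apply (Finset.lt_inf'_iff _).2
    intro i _
    exact norm_pos_iff.2 (ha i)
  refine ⟨min (‖L‖ / 2) m, lt_min hL2 hmpos, fun n => ?_⟩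
  rcases le_or_gt n N with hn | hn
  · exact le_trans (min_le_right _ _)
      (Finset.inf'_le _ (Finset.mem_range.2 (Nat.lt_succ_of_le hn)))
  · exact le_trans (min_le_left _ _) (hN n hn.le)

lemma aux_qPoch_lb (q : ℂ) (hq : ‖q‖ < 1) : ∃ C > 0, ∀ n : ℕ, C ≤ ‖qPoch q q n‖ := by
  refine aux_norm_lb _ (aux_qPoch_ne q hq) (qPochInf q q)
    (aux_tprod_ne_zero q q hq (aux_fac_ne q q hq hq)) ?_
  exact (aux_multipliable q q hq).hasProd.tendsto_prod_nat

lemma aux_cauchy_bound (q x y t : ℂ) (hq : ‖q‖ < 1) (hxt : ‖x * t‖ < 1) :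
    ∃ M ρ : ℝ, 0 ≤ M ∧ 0 ≤ ρ ∧ ρ < 1 ∧ ∀ n : ℕ, ‖cauchyP q x y n * t ^ n‖ ≤ M * ρ ^ n := by
  set a := ‖x * t‖ with ha
  set b := ‖y * t‖ with hb
  have ha0 : 0 ≤ a := norm_nonneg _
  have hb0 : 0 ≤ b := norm_nonneg _
  set ρ := (1 + a) / 2 with hρ
  have hρpos : 0 < ρ := by rw [hρ]; linarith
  have haρ : a < ρ := by rw [hρ]; linarith
  have hρ1 : ρ < 1 := by rw [hρ]; linarith
  have htend : Tendsto (fun j : ℕ => b * ‖q‖ ^ j) atTop (nhds 0) := by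
    simpa using (tendsto_pow_atTop_nhds_zero_of_lt_one (norm_nonneg q) hq).const_mul b
  obtain ⟨J, hJ⟩ := (htend.eventually_le_const (by linarith : (0:ℝ) < ρ - a)).exists_forall_of_atTop
  have hfac : ∀ n : ℕ, ‖cauchyP q x y n * t ^ n‖ ≤ ∏ j ∈ Finset.range n, (a + b * ‖q‖ ^ j) := by
    intro n
    have h1 : ‖cauchyP q x y n * t ^ n‖ = ∏ j ∈ Finset.range n, ‖(x - q ^ j * y) * t‖ := by
      rw [cauchyP]
      rw [show (∏ j ∈ Finset.range n, (x - q ^ j * y)) * t ^ n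
          = ∏ j ∈ Finset.range n, ((x - q ^ j * y) * t) by
        rw [Finset.prod_mul_distrib, Finset.prod_const, Finset.card_range]]
      exact norm_prod _ _
    rw [h1]
    apply Finset.prod_le_prod (fun j _ => norm_nonneg _)
    intro j _
    have h2 : (x - q ^ j * y) * t = x * t - q ^ j * (y * t) := by ring
    rw [h2]
    calc ‖x * t - q ^ j * (y * t)‖ ≤ ‖x * t‖ + ‖q ^ j * (y * t)‖ := norm_sub_le _ _
      _ = a + b * ‖q‖ ^ j := by rw [norm_mul (q ^ j) (y * t), norm_pow, ← ha, ← hb]; ring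
  set d : ℕ → ℝ := fun j => max ((a + b * ‖q‖ ^ j) / ρ) 1 with hd
  have hd1 : ∀ j, 1 ≤ d j := fun j => le_max_right _ _
  have hdJ : ∀ j, J ≤ j → d j = 1 := by
    intro j hj
    apply max_eq_right
    rw [div_le_one hρpos]
    have := hJ j hj
    linarith
  set K := ∏ j ∈ Finset.range J, d j with hK
  have hK0 : 0 ≤ K := Finset.prod_nonneg fun j _ => le_trans zero_le_one (hd1 j)
  refine ⟨K, ρ, hK0, hρpos.le, hρ1, fun n => ?_⟩
  calc ‖cauchyP q x y n * t ^ n‖ ≤ ∏ j ∈ Finset.range n, (a + b * ‖q‖ ^ j) := hfac n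
    _ ≤ ∏ j ∈ Finset.range n, (d j * ρ) := by
        apply Finset.prod_le_prod (fun j _ => by positivity)
        intro j _
        have hle : (a + b * ‖q‖ ^ j) / ρ ≤ d j := le_max_left _ _
        calc a + b * ‖q‖ ^ j = (a + b * ‖q‖ ^ j) / ρ * ρ := by field_simp
          _ ≤ d j * ρ := mul_le_mul_of_nonneg_right hle hρpos.le
    _ = (∏ j ∈ Finset.range n, d j) * ρ ^ n := by
        rw [Finset.prod_mul_distrib, Finset.prod_const, Finset.card_range]
    _ ≤ K * ρ ^ n := by
        apply mul_le_mul_of_nonneg_right _ (pow_nonneg hρpos.le n)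
        have h2 : ∏ j ∈ Finset.range n, d j = ∏ j ∈ Finset.range (min n J), d j := by
          symm
          apply Finset.prod_subset (Finset.range_subset_range.2 (min_le_left n J))
          intro j hj hj'
          apply hdJ
          simp only [Finset.mem_range] at hj hj'
          omega
        rw [h2, hK]
        have hone : ∀ s : Finset ℕ, 1 ≤ ∏ j ∈ s, d j := by
          intro s
          apply Finset.prod_induction d (fun z => 1 ≤ z)
          · intro u v hu hv; nlinarith
          · exact le_refl 1
          · intro i _; exact hd1 i
        have hsub : Finset.range (min n J) ⊆ Finset.range J :=
          Finset.range_subset_range.2 (min_le_right n J)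
        rw [← Finset.prod_sdiff hsub]
        exact le_mul_of_one_le_left
          (Finset.prod_nonneg fun j _ => le_trans zero_le_one (hd1 j)) (hone _)

/-- the coefficients of the generating function -/
noncomputable def cfn (q x y : ℂ) (n : ℕ) : ℂ := cauchyP q x y n / qPoch q q n

/-- the generating function -/
noncomputable def Sfn (q x y w : ℂ) : ℂ := ∑' n : ℕ, cfn q x y n * w ^ n

lemma aux_cfn_rec (q x y : ℂ) (hq : ‖q‖ < 1) (n : ℕ) :
    cfn q x y (n + 1) * (1 - q ^ (n + 1)) = cfn q x y n * (x - q ^ n * y) := by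
  have e1 : cauchyP q x y (n + 1) = cauchyP q x y n * (x - q ^ n * y) :=
    Finset.prod_range_succ _ n
  have e2 : qPoch q q (n + 1) = qPoch q q n * (1 - q * q ^ n) :=
    Finset.prod_range_succ _ n
  have h1 : qPoch q q n ≠ 0 := aux_qPoch_ne q hq n
  have h2 : (1 : ℂ) - q * q ^ n ≠ 0 := aux_fac_ne q q hq hq n
  rw [cfn, cfn, e1, e2]
  have h3 : (1 : ℂ) - q ^ (n + 1) = 1 - q * q ^ n := by ring
  rw [h3]
  rw [div_mul_eq_mul_div, div_mul_eq_mul_div, div_eq_div_iff (mul_ne_zero h1 h2) h1]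
  ring

lemma aux_cfn_bound (q x y t : ℂ) (hq : ‖q‖ < 1) (hxt : ‖x * t‖ < 1) :
    ∃ M ρ : ℝ, 0 ≤ M ∧ 0 ≤ ρ ∧ ρ < 1 ∧ ∀ n : ℕ, ‖cfn q x y n * t ^ n‖ ≤ M * ρ ^ n := by
  obtain ⟨C, hC, hCle⟩ := aux_qPoch_lb q hq
  obtain ⟨M, ρ, hM0, hρ0, hρ1, hMb⟩ := aux_cauchy_bound q x y t hq hxt
  refine ⟨M / C, ρ, by positivity, hρ0, hρ1, fun n => ?_⟩
  have h1 : cfn q x y n * t ^ n = cauchyP q x y n * t ^ n / qPoch q q n := by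
    rw [cfn]; ring
  rw [h1, norm_div]
  rw [div_le_iff₀ (lt_of_lt_of_le hC (hCle n))] at *
  calc ‖cauchyP q x y n * t ^ n‖ ≤ M * ρ ^ n := hMb n
    _ = M / C * ρ ^ n * C := by field_simp
    _ ≤ M / C * ρ ^ n * ‖qPoch q q n‖ :=
        mul_le_mul_of_nonneg_left (hCle n) (by positivity)

end Aux

theorem stmt_4 (q x y t : ℂ) (hq : ‖q‖ < 1) (hxt : ‖x * t‖ < 1) :
    (x ≠ 0 → ∀ n : ℕ, cauchyP q x y n = qPoch q (y / x) n * x ^ n) ∧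
      ∑' n : ℕ, cauchyP q x y n * t ^ n / qPoch q q n =
        qPochInf q (y * t) / qPochInf q (x * t) := by
  constructor
  · intro hx n
    rw [cauchyP, qPoch]
    rw [show (∏ j ∈ Finset.range n, (1 - y / x * q ^ j)) * x ^ n
        = ∏ j ∈ Finset.range n, ((1 - y / x * q ^ j) * x) by
      rw [Finset.prod_mul_distrib, Finset.prod_const, Finset.card_range]]
    apply Finset.prod_congr rfl
    intro j _
    field_simp
  · obtain ⟨M, ρ, hM0, hρ0, hρ1, hB⟩ := aux_cfn_bound q x y t hq hxt
    have hρ1' : (0:ℝ) < 1 - ρ := by linarith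
    -- summability at q^m * t
    have hsum : ∀ m : ℕ, Summable (fun n : ℕ => cfn q x y n * (q ^ m * t) ^ n) := by
      intro m
      apply Summable.of_norm_bounded
        ((summable_geometric_of_lt_one hρ0 hρ1).mul_left M)
      intro n
      have h1 : cfn q x y n * (q ^ m * t) ^ n = cfn q x y n * t ^ n * (q ^ m) ^ n := by ring
      rw [h1, norm_mul]
      calc ‖cfn q x y n * t ^ n‖ * ‖(q ^ m) ^ n‖ ≤ ‖cfn q x y n * t ^ n‖ * 1 := by
            apply mul_le_mul_of_nonneg_left _ (norm_nonneg _)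
            rw [norm_pow, norm_pow]
            exact pow_le_one₀ (pow_nonneg (norm_nonneg q) m) (pow_le_one₀ (norm_nonneg q) hq.le)
        _ ≤ M * ρ ^ n := by simpa using hB n
    have hc0 : cfn q x y 0 = 1 := by simp [cfn, cauchyP, qPoch]
    -- functional equation
    have hFE : ∀ m : ℕ, (1 - x * (q ^ m * t)) * Sfn q x y (q ^ m * t)
        = (1 - y * (q ^ m * t)) * Sfn q x y (q ^ (m + 1) * t) := by
      intro m
      set w := q ^ m * t with hw
      have hqw : q ^ (m + 1) * t = q * w := by rw [hw]; ring
      have hf : Summable (fun n : ℕ => cfn q x y n * w ^ n) := hsum m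
      have hf' : Summable (fun n : ℕ => cfn q x y n * (q * w) ^ n) := by
        have := hsum (m + 1)
        rwa [hqw] at this
      have hg : Summable (fun n : ℕ => cfn q x y n * w ^ n - cfn q x y n * (q * w) ^ n) :=
        hf.sub hf'
      have e1 : ∑' n : ℕ, (cfn q x y n * w ^ n - cfn q x y n * (q * w) ^ n)
          = Sfn q x y w - Sfn q x y (q * w) := by
        rw [Summable.tsum_sub hf hf']; rfl
      have e3 : ∀ n : ℕ, cfn q x y (n+1) * w ^ (n+1) - cfn q x y (n+1) * (q * w) ^ (n+1)
          = x * w * (cfn q x y n * w ^ n) - y * w * (cfn q x y n * (q * w) ^ n) := by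
        intro n
        have hr := aux_cfn_rec q x y hq n
        calc cfn q x y (n+1) * w ^ (n+1) - cfn q x y (n+1) * (q * w) ^ (n+1)
            = cfn q x y (n+1) * (1 - q ^ (n+1)) * w ^ (n+1) := by ring
          _ = cfn q x y n * (x - q ^ n * y) * w ^ (n+1) := by rw [hr]
          _ = x * w * (cfn q x y n * w ^ n) - y * w * (cfn q x y n * (q * w) ^ n) := by ring
      have e2 : Sfn q x y w - Sfn q x y (q * w)
          = x * w * Sfn q x y w - y * w * Sfn q x y (q * w) := by
        rw [← e1, Summable.tsum_eq_zero_add hg]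
        have h0 : cfn q x y 0 * w ^ 0 - cfn q x y 0 * (q * w) ^ 0 = 0 := by ring
        rw [h0, zero_add]
        calc ∑' n : ℕ, (cfn q x y (n+1) * w ^ (n+1) - cfn q x y (n+1) * (q * w) ^ (n+1))
            = ∑' n : ℕ, (x * w * (cfn q x y n * w ^ n) - y * w * (cfn q x y n * (q * w) ^ n)) :=
              tsum_congr e3
          _ = (∑' n : ℕ, x * w * (cfn q x y n * w ^ n))
              - ∑' n : ℕ, y * w * (cfn q x y n * (q * w) ^ n) :=
              Summable.tsum_sub (hf.mul_left _) (hf'.mul_left _)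
          _ = x * w * Sfn q x y w - y * w * Sfn q x y (q * w) := by
              rw [tsum_mul_left, tsum_mul_left]; rfl
      rw [hqw]
      linear_combination e2
    -- iteration
    have hiter : ∀ N : ℕ, (∏ j ∈ Finset.range N, (1 - x * t * q ^ j)) * Sfn q x y t
        = (∏ j ∈ Finset.range N, (1 - y * t * q ^ j)) * Sfn q x y (q ^ N * t) := by
      intro N
      induction N with
      | zero => simp
      | succ N ih =>
        have hfe := hFE N
        rw [Finset.prod_range_succ, Finset.prod_range_succ]
        calc (∏ j ∈ Finset.range N, (1 - x * t * q ^ j)) * (1 - x * t * q ^ N) * Sfn q x y t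
            = (1 - x * (q ^ N * t)) *
              ((∏ j ∈ Finset.range N, (1 - x * t * q ^ j)) * Sfn q x y t) := by ring
          _ = (1 - x * (q ^ N * t)) *
              ((∏ j ∈ Finset.range N, (1 - y * t * q ^ j)) * Sfn q x y (q ^ N * t)) := by
              rw [ih]
          _ = (∏ j ∈ Finset.range N, (1 - y * t * q ^ j)) *
              ((1 - x * (q ^ N * t)) * Sfn q x y (q ^ N * t)) := by ring
          _ = (∏ j ∈ Finset.range N, (1 - y * t * q ^ j)) *
              ((1 - y * (q ^ N * t)) * Sfn q x y (q ^ (N + 1) * t)) := by rw [hfe]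
          _ = (∏ j ∈ Finset.range N, (1 - y * t * q ^ j)) * (1 - y * t * q ^ N) *
              Sfn q x y (q ^ (N + 1) * t) := by ring
    -- limit of Sfn (q^N * t)
    set D : ℝ := M * ρ * (1 - ρ)⁻¹ with hD
    have hSlim : Filter.Tendsto (fun N : ℕ => Sfn q x y (q ^ N * t)) Filter.atTop (nhds 1) := by
      rw [tendsto_iff_norm_sub_tendsto_zero]
      have hbound : ∀ N : ℕ, ‖Sfn q x y (q ^ N * t) - 1‖ ≤ ‖q‖ ^ N * D := by
        intro N
        have h1 : Sfn q x y (q ^ N * t) - 1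
            = ∑' n : ℕ, cfn q x y (n+1) * (q ^ N * t) ^ (n+1) := by
          rw [Sfn, Summable.tsum_eq_zero_add (hsum N), hc0]
          simp
        rw [h1]
        have hterm : ∀ n : ℕ, ‖cfn q x y (n+1) * (q ^ N * t) ^ (n+1)‖
            ≤ ‖q‖ ^ N * (M * ρ) * ρ ^ n := by
          intro n
          have h2 : cfn q x y (n+1) * (q ^ N * t) ^ (n+1)
              = cfn q x y (n+1) * t ^ (n+1) * (q ^ N) ^ (n+1) := by ring
          rw [h2, norm_mul]
          have h3 : ‖(q ^ N) ^ (n+1)‖ ≤ ‖q‖ ^ N := by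
            rw [norm_pow, norm_pow]
            exact pow_le_of_le_one (pow_nonneg (norm_nonneg q) N)
              (pow_le_one₀ (norm_nonneg q) hq.le) (Nat.succ_ne_zero n)
          calc ‖cfn q x y (n+1) * t ^ (n+1)‖ * ‖(q ^ N) ^ (n+1)‖
              ≤ (M * ρ ^ (n+1)) * ‖q‖ ^ N :=
                mul_le_mul (hB (n+1)) h3 (norm_nonneg _) (by positivity)
            _ = ‖q‖ ^ N * (M * ρ) * ρ ^ n := by ring
        have hgeo : Summable (fun n : ℕ => ‖q‖ ^ N * (M * ρ) * ρ ^ n) :=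
          (summable_geometric_of_lt_one hρ0 hρ1).mul_left _
        have hs1 : Summable (fun n : ℕ => ‖cfn q x y (n+1) * (q ^ N * t) ^ (n+1)‖) :=
          Summable.of_nonneg_of_le (fun n => norm_nonneg _) hterm hgeo
        calc ‖∑' n : ℕ, cfn q x y (n+1) * (q ^ N * t) ^ (n+1)‖
            ≤ ∑' n : ℕ, ‖cfn q x y (n+1) * (q ^ N * t) ^ (n+1)‖ := norm_tsum_le_tsum_norm hs1
          _ ≤ ∑' n : ℕ, ‖q‖ ^ N * (M * ρ) * ρ ^ n := Summable.tsum_le_tsum hterm hs1 hgeo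
          _ = ‖q‖ ^ N * D := by
              rw [tsum_mul_left, tsum_geometric_of_lt_one hρ0 hρ1, hD]; ring
      apply squeeze_zero (fun N => norm_nonneg _) hbound
      have := (tendsto_pow_atTop_nhds_zero_of_lt_one (norm_nonneg q) hq).mul_const D
      simpa using this
    -- pass to the limit
    have hxprod : Filter.Tendsto (fun N : ℕ => ∏ j ∈ Finset.range N, (1 - x * t * q ^ j))
        Filter.atTop (nhds (qPochInf q (x * t))) := by
      rw [qPochInf]
      exact (aux_multipliable (x * t) q hq).hasProd.tendsto_prod_nat
    have hyprod : Filter.Tendsto (fun N : ℕ => ∏ j ∈ Finset.range N, (1 - y * t * q ^ j))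
        Filter.atTop (nhds (qPochInf q (y * t))) := by
      rw [qPochInf]
      exact (aux_multipliable (y * t) q hq).hasProd.tendsto_prod_nat
    have h1 : Filter.Tendsto
        (fun N : ℕ => (∏ j ∈ Finset.range N, (1 - y * t * q ^ j)) * Sfn q x y (q ^ N * t))
        Filter.atTop (nhds (qPochInf q (x * t) * Sfn q x y t)) :=
      (hxprod.mul_const _).congr hiter
    have h2 : Filter.Tendsto
        (fun N : ℕ => (∏ j ∈ Finset.range N, (1 - y * t * q ^ j)) * Sfn q x y (q ^ N * t))
        Filter.atTop (nhds (qPochInf q (y * t) * 1)) :=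
      hyprod.mul hSlim
    have heq : qPochInf q (x * t) * Sfn q x y t = qPochInf q (y * t) * 1 :=
      tendsto_nhds_unique h1 h2
    have hX0 : qPochInf q (x * t) ≠ 0 := by
      rw [qPochInf]
      exact aux_tprod_ne_zero (x * t) q hq (aux_fac_ne (x * t) q hxt hq)
    have hS : ∑' n : ℕ, cauchyP q x y n * t ^ n / qPoch q q n = Sfn q x y t := by
      rw [Sfn]
      exact tsum_congr fun n => by rw [cfn]; ring
    rw [hS, eq_div_iff hX0]
    linear_combination heq
end
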